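/- Let L₋ be a self-adjoint operator of the form L₋ = D + 1 - Q on L²(ℝ²), with Q the ground state, let S₁ solve L₋S₁ = ΛQ and S₀ solve L₋S₀ = -∇Q (componentwise). Then the solvability identity (∇Q, S₀) - (∇Q, ΛS₀) + (∇Q, ∇S₁) + (∇Q, S₁ S₀) = 0 holds componentwise. -/

import Mathlib

open MeasureTheory

local notation "E2" => EuclideanSpace ℝ (Fin 2)

/-- The `j`-th partial derivative on `ℝ²`. -/
noncomputable def pd (j : Fin 2) (f : E2 → ℝ) (x : E2) : ℝ :=
  fderiv ℝ f x (EuclideanSpace.single j 1)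

/-- The scaling operator `Λf = f + x·∇f`. -/
noncomputable def Lam (f : E2 → ℝ) (x : E2) : ℝ :=
  f x + ∑ j : Fin 2, x j * pd j f x

/-- The operator `L₋ = D + 1 - Q`. -/
noncomputable def Lminus (D : (E2 → ℝ) → (E2 → ℝ)) (Q f : E2 → ℝ) (x : E2) : ℝ :=
  D f x + f x - Q x * f x

-- auxiliary lemmas

lemma stg (f : SchwartzMap E2 ℝ) : Function.HasTemperateGrowth ⇑f :=
  ⟨f.smooth ⊤, fun n => ⟨0, SchwartzMap.seminorm ℝ 0 n f, fun x => by
    simpa using SchwartzMap.norm_iteratedFDeriv_le_seminorm ℝ f n x⟩⟩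

noncomputable def pdS (j : Fin 2) (f : SchwartzMap E2 ℝ) : SchwartzMap E2 ℝ :=
  LineDeriv.lineDerivOpCLM ℝ (SchwartzMap E2 ℝ) (EuclideanSpace.single j (1:ℝ) : E2) f

lemma pdS_coe (j : Fin 2) (f : SchwartzMap E2 ℝ) : ⇑(pdS j f) = pd j ⇑f :=
  funext fun x => rfl

noncomputable def cMul (i : Fin 2) (f : SchwartzMap E2 ℝ) : SchwartzMap E2 ℝ :=
  SchwartzMap.bilinLeftCLM (ContinuousLinearMap.mul ℝ ℝ)
    ((EuclideanSpace.proj i : E2 →L[ℝ] ℝ).hasTemperateGrowth) f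

lemma cMul_apply (i : Fin 2) (f : SchwartzMap E2 ℝ) (x : E2) : cMul i f x = f x * x i := rfl

noncomputable def mulS (f g : SchwartzMap E2 ℝ) : SchwartzMap E2 ℝ :=
  SchwartzMap.bilinLeftCLM (ContinuousLinearMap.mul ℝ ℝ) (stg g) f

lemma mulS_apply (f g : SchwartzMap E2 ℝ) (x : E2) : mulS f g x = f x * g x := rfl

lemma pd_add {f g : E2 → ℝ} {x : E2} (j : Fin 2)
    (hf : DifferentiableAt ℝ f x) (hg : DifferentiableAt ℝ g x) :
    pd j (fun y => f y + g y) x = pd j f x + pd j g x := by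
  unfold pd; rw [fderiv_fun_add hf hg]; rfl

lemma pd_sub {f g : E2 → ℝ} {x : E2} (j : Fin 2)
    (hf : DifferentiableAt ℝ f x) (hg : DifferentiableAt ℝ g x) :
    pd j (fun y => f y - g y) x = pd j f x - pd j g x := by
  unfold pd; rw [fderiv_fun_sub hf hg]; rfl

lemma pd_mul {f g : E2 → ℝ} {x : E2} (j : Fin 2)
    (hf : DifferentiableAt ℝ f x) (hg : DifferentiableAt ℝ g x) :
    pd j (fun y => f y * g y) x = pd j f x * g x + f x * pd j g x := by
  unfold pd; rw [fderiv_fun_mul hf hg]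
  simp [ContinuousLinearMap.add_apply, ContinuousLinearMap.smul_apply, smul_eq_mul]
  ring

lemma pd_coord (i j : Fin 2) (x : E2) :
    pd j (fun y : E2 => y i) x = if j = i then 1 else 0 := by
  have h : (fun y : E2 => y i) = ⇑(EuclideanSpace.proj (𝕜 := ℝ) i) := rfl
  unfold pd
  rw [h, ContinuousLinearMap.fderiv]
  simp [EuclideanSpace.proj, EuclideanSpace.single_apply, eq_comm]

lemma pd_of_schwartz (f : SchwartzMap E2 ℝ) (i j : Fin 2) (x : E2) :
    pd i (pd j ⇑f) x
      = fderiv ℝ (fderiv ℝ ⇑f) x (EuclideanSpace.single i 1) (EuclideanSpace.single j 1) := by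
  have hdf : Differentiable ℝ (fderiv ℝ ⇑f) :=
    (((f.smooth ⊤).fderiv_right (m := (⊤:ℕ∞)) (by exact_mod_cast le_top)).differentiable (by simp))
  unfold pd
  rw [fderiv_clm_apply (hdf x) (differentiableAt_const _)]
  simp

lemma pd_pd_comm (f : SchwartzMap E2 ℝ) (i j : Fin 2) (x : E2) :
    pd i (pd j ⇑f) x = pd j (pd i ⇑f) x := by
  have hdf : Differentiable ℝ (fderiv ℝ ⇑f) :=
    (((f.smooth ⊤).fderiv_right (m := (⊤:ℕ∞)) (by exact_mod_cast le_top)).differentiable (by simp))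
  rw [pd_of_schwartz, pd_of_schwartz]
  exact second_derivative_symmetric (fun y => f.differentiableAt.hasFDerivAt)
    (hdf x).hasFDerivAt _ _

noncomputable def lamS (f : SchwartzMap E2 ℝ) : SchwartzMap E2 ℝ :=
  f + (cMul 0 (pdS 0 f) + cMul 1 (pdS 1 f))

lemma lamS_coe (f : SchwartzMap E2 ℝ) : ⇑(lamS f) = Lam ⇑f := by
  funext x
  simp only [lamS, SchwartzMap.add_apply, cMul_apply, Lam, Fin.sum_univ_two]
  rw [pdS_coe, pdS_coe]
  ring

lemma lam_diff (f : SchwartzMap E2 ℝ) : Differentiable ℝ (Lam ⇑f) := by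
  rw [← lamS_coe]; exact (lamS f).differentiable

lemma pd_diff (f : SchwartzMap E2 ℝ) (i : Fin 2) : Differentiable ℝ (pd i ⇑f) := by
  rw [← pdS_coe]; exact (pdS i f).differentiable

lemma coord_diff (i : Fin 2) : Differentiable ℝ (fun y : E2 => y i) :=
  (EuclideanSpace.proj (𝕜 := ℝ) i).differentiable

lemma pd_lam (f : SchwartzMap E2 ℝ) (j : Fin 2) (x : E2) :
    pd j (Lam ⇑f) x = Lam (pd j ⇑f) x + pd j ⇑f x := by
  have hL : Lam ⇑f = fun y => f y + (y 0 * pd 0 ⇑f y + y 1 * pd 1 ⇑f y) := by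
    funext y; simp [Lam, Fin.sum_univ_two]
  have hcd : ∀ (i : Fin 2), DifferentiableAt ℝ (fun y : E2 => y i * pd i ⇑f y) x :=
    fun i => ((coord_diff i) x).mul ((pd_diff f i) x)
  rw [hL, pd_add (g := fun y => y 0 * pd 0 ⇑f y + y 1 * pd 1 ⇑f y) j f.differentiableAt ((hcd 0).add (hcd 1)),
    pd_add j (hcd 0) (hcd 1),
    pd_mul j ((coord_diff 0) x) ((pd_diff f 0) x),
    pd_mul j ((coord_diff 1) x) ((pd_diff f 1) x),
    pd_coord 0 j x, pd_coord 1 j x,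
    pd_pd_comm f j 0 x, pd_pd_comm f j 1 x]
  simp only [Lam, Fin.sum_univ_two]
  fin_cases j <;> simp <;> ring

lemma intble_of_eq {h : E2 → ℝ} (S : SchwartzMap E2 ℝ) (he : ∀ x, S x = h x) :
    Integrable h (volume : Measure E2) := by
  have hfe : ⇑S = h := funext he
  rw [← hfe]; exact S.integrable

lemma intble_mul (f g : SchwartzMap E2 ℝ) :
    Integrable (fun x : E2 => f x * g x) (volume : Measure E2) :=
  intble_of_eq (mulS f g) (fun x => rfl)

lemma intble_coord_pd (u : SchwartzMap E2 ℝ) (i : Fin 2) :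
    Integrable (fun x : E2 => x i * pd i ⇑u x) (volume : Measure E2) :=
  intble_of_eq (cMul i (pdS i u)) (fun x => by
    rw [cMul_apply, pdS_coe]; exact mul_comm _ _)

lemma intble_coord_mul (u : SchwartzMap E2 ℝ) (i : Fin 2) :
    Integrable (fun x : E2 => x i * u x) (volume : Measure E2) :=
  intble_of_eq (cMul i u) (fun x => by rw [cMul_apply]; exact mul_comm _ _)

lemma int_coord_pd (u : SchwartzMap E2 ℝ) (i : Fin 2) :
    ∫ x : E2, x i * pd i ⇑u x = - ∫ x : E2, u x := by
  have h1 : Integrable (fun x : E2 =>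
      fderiv ℝ (fun y : E2 => y i) x (EuclideanSpace.single i 1) * u x) (volume : Measure E2) := by
    have he : (fun x : E2 => fderiv ℝ (fun y : E2 => y i) x (EuclideanSpace.single i 1) * u x)
        = fun x : E2 => u x := by
      funext x
      have hc := pd_coord i i x
      unfold pd at hc
      rw [hc]; simp
    rw [he]; exact u.integrable
  have key := integral_mul_fderiv_eq_neg_fderiv_mul_of_integrable (μ := (volume : Measure E2))
    (f := fun y : E2 => y i) (g := ⇑u) (v := EuclideanSpace.single i 1)
    h1 (intble_coord_pd u i) (intble_coord_mul u i) (fun x _ => coord_diff i x) (fun x _ => u.differentiableAt)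
  have h2 : (fun x : E2 => fderiv ℝ (fun y : E2 => y i) x (EuclideanSpace.single i 1) * u x)
      = fun x : E2 => u x := by
    funext x
    have hc := pd_coord i i x
    unfold pd at hc
    rw [hc]; simp
  rw [h2] at key
  exact key

lemma int_lam_add (u : SchwartzMap E2 ℝ) :
    ∫ x : E2, (Lam ⇑u x + u x) = 0 := by
  have he : (fun x : E2 => Lam ⇑u x + u x)
      = fun x : E2 => (u x + u x) + (x 0 * pd 0 ⇑u x + x 1 * pd 1 ⇑u x) := by
    funext x; simp only [Lam, Fin.sum_univ_two]; ring
  have i1 : Integrable (fun x : E2 => u x + u x) (volume : Measure E2) :=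
    u.integrable.add u.integrable
  have i2 : Integrable (fun x : E2 => x 0 * pd 0 ⇑u x + x 1 * pd 1 ⇑u x)
      (volume : Measure E2) := (intble_coord_pd u 0).add (intble_coord_pd u 1)
  rw [he, integral_add i1 i2, integral_add u.integrable u.integrable,
    integral_add (intble_coord_pd u 0) (intble_coord_pd u 1),
    int_coord_pd u 0, int_coord_pd u 1]
  ring

lemma intble_lam_add (u : SchwartzMap E2 ℝ) :
    Integrable (fun x : E2 => Lam ⇑u x + u x) (volume : Measure E2) :=
  intble_of_eq (lamS u + u) (fun x => by
    rw [SchwartzMap.add_apply, lamS_coe])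

lemma intble_lam_mul (f g : SchwartzMap E2 ℝ) :
    Integrable (fun x : E2 => Lam ⇑f x * g x) (volume : Measure E2) :=
  intble_of_eq (mulS (lamS f) g) (fun x => by rw [mulS_apply, lamS_coe])

lemma intble_mul_lam (f g : SchwartzMap E2 ℝ) :
    Integrable (fun x : E2 => f x * Lam ⇑g x) (volume : Measure E2) :=
  intble_of_eq (mulS f (lamS g)) (fun x => by rw [mulS_apply, lamS_coe])

lemma lam_antisym (f g : SchwartzMap E2 ℝ) :
    ∫ x : E2, f x * Lam ⇑g x = - ∫ x : E2, Lam ⇑f x * g x := by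
  have hpt : (fun x : E2 => f x * Lam ⇑g x)
      = fun x : E2 => (Lam ⇑(mulS f g) x + (mulS f g) x) - Lam ⇑f x * g x := by
    funext x
    have hm : ⇑(mulS f g) = fun y : E2 => f y * g y := rfl
    simp only [Lam, Fin.sum_univ_two, mulS_apply, hm]
    rw [pd_mul 0 f.differentiableAt g.differentiableAt,
      pd_mul 1 f.differentiableAt g.differentiableAt]
    ring
  rw [hpt, integral_sub (intble_lam_add (mulS f g)) (intble_lam_mul f g),
    int_lam_add, zero_sub]


/-- Solvability identity: with `L₋ = D + 1 - Q` self-adjoint, `L₋S₁ = ΛQ` and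
`L₋S₀ = -∇Q` componentwise, one has
`(∇Q, S₀) - (∇Q, ΛS₀) + (∇Q, ∇S₁) + (∇Q, S₁S₀) = 0` componentwise. -/
theorem solvability_identity (D : (E2 → ℝ) → (E2 → ℝ))
    (Q S₁ : SchwartzMap E2 ℝ) (S₀ : Fin 2 → SchwartzMap E2 ℝ)
    (hQ : ∀ x : E2, D (⇑Q) x + Q x = (Q x) ^ 2)
    (hDgrad : ∀ (g : E2 → ℝ) (j : Fin 2) (x : E2), pd j (D g) x = D (pd j g) x)
    (hDlam : ∀ (g : E2 → ℝ) (x : E2), D (Lam g) x - Lam (D g) x = D g x)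
    (hsym : ∀ f g : E2 → ℝ,
      ∫ x, Lminus D (⇑Q) f x * g x = ∫ x, f x * Lminus D (⇑Q) g x)
    (hS₁ : ∀ x : E2, Lminus D (⇑Q) (⇑S₁) x = Lam (⇑Q) x)
    (hS₀ : ∀ (j : Fin 2) (x : E2), Lminus D (⇑Q) (⇑(S₀ j)) x = - pd j (⇑Q) x) :
    ∀ j : Fin 2,
      (∫ x, pd j (⇑Q) x * S₀ j x) - (∫ x, pd j (⇑Q) x * Lam (⇑(S₀ j)) x)
        + (∫ x, pd j (⇑Q) x * pd j (⇑S₁) x)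
        + (∫ x, pd j (⇑Q) x * (S₁ x * S₀ j x)) = 0 := by
  intro j
  have hP : ⇑(pdS j Q) = pd j ⇑Q := pdS_coe j Q
  -- the function D S₁ equals a smooth function
  have hDS₁ : D ⇑S₁ = fun x => Lam ⇑Q x - S₁ x + Q x * S₁ x := by
    funext x
    have h := hS₁ x
    simp only [Lminus] at h
    linarith
  have hDpd : ∀ x : E2, D (pd j ⇑S₁) x
      = pd j (Lam ⇑Q) x - pd j ⇑S₁ x + (pd j ⇑Q x * S₁ x + Q x * pd j ⇑S₁ x) := by
    intro x
    rw [← hDgrad ⇑S₁ j x, hDS₁]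
    rw [pd_add (f := fun y => Lam ⇑Q y - S₁ y) (g := fun y => Q y * S₁ y) j ((lam_diff Q x).sub S₁.differentiableAt)
        (Q.differentiableAt.mul S₁.differentiableAt),
      pd_sub j (lam_diff Q x) S₁.differentiableAt,
      pd_mul j Q.differentiableAt S₁.differentiableAt]
  have key : ∀ x : E2, Lminus D (⇑Q) (pd j ⇑S₁) x
      = Lam (pd j ⇑Q) x + pd j ⇑Q x + pd j ⇑Q x * S₁ x := by
    intro x
    simp only [Lminus]
    rw [hDpd x, pd_lam Q j x]
    ring
  have h1 := hsym ⇑(S₀ j) (pd j ⇑S₁)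
  have hL : (fun x : E2 => Lminus D (⇑Q) (⇑(S₀ j)) x * pd j (⇑S₁) x)
      = fun x : E2 => -(pd j (⇑Q) x * pd j (⇑S₁) x) := by
    funext x; rw [hS₀ j x]; ring
  have hR : (fun x : E2 => S₀ j x * Lminus D (⇑Q) (pd j ⇑S₁) x)
      = fun x : E2 => S₀ j x * Lam (pd j ⇑Q) x
          + (pd j ⇑Q x * S₀ j x + pd j ⇑Q x * (S₁ x * S₀ j x)) := by
    funext x; rw [key x]; ring
  rw [hL, hR, integral_neg] at h1
  have ia : Integrable (fun x : E2 => S₀ j x * Lam (pd j ⇑Q) x) (volume : Measure E2) := by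
    have := intble_mul_lam (S₀ j) (pdS j Q); rwa [hP] at this
  have ib : Integrable (fun x : E2 => pd j ⇑Q x * S₀ j x) (volume : Measure E2) := by
    have := intble_mul (pdS j Q) (S₀ j)
    simp only [hP] at this; exact this
  have ic : Integrable (fun x : E2 => pd j ⇑Q x * (S₁ x * S₀ j x)) (volume : Measure E2) := by
    refine intble_of_eq (mulS (pdS j Q) (mulS S₁ (S₀ j))) fun x => ?_
    rw [mulS_apply, mulS_apply, congrFun hP x]
  have ibc : Integrable (fun x : E2 => pd j ⇑Q x * S₀ j x + pd j ⇑Q x * (S₁ x * S₀ j x))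
      (volume : Measure E2) := ib.add ic
  rw [integral_add ia ibc, integral_add ib ic] at h1
  have ha := lam_antisym (S₀ j) (pdS j Q)
  rw [hP] at ha
  have hc : (fun x : E2 => Lam (⇑(S₀ j)) x * pd j (⇑Q) x)
      = fun x : E2 => pd j (⇑Q) x * Lam (⇑(S₀ j)) x := funext fun x => mul_comm _ _
  rw [hc] at ha
  rw [ha] at h1
  linarith [h1]
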